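/- arXiv:1410.8846 — 2 statements merged into one kernel-verified Lean document; each statement's English description precedes it below -/
import Mathlib

section
/- For all real numbers a and b, F(a) - F(b) ≤ (a³ - b)(a - b), where F(x) = (1/4)(x² - 1)². -/
/-- Convex-splitting inequality for the double-well potential
`F(x) = (1/4)(x² - 1)²`: for all reals `a, b`,
`F(a) - F(b) ≤ (a³ - b)(a - b)`. -/
theorem convex_splitting_inequality (a b : ℝ) :
    (1/4) * (a^2 - 1)^2 - (1/4) * (b^2 - 1)^2 ≤ (a^3 - b) * (a - b) := by
  nlinarith [sq_nonneg (a-b), sq_nonneg (a+b), sq_nonneg (a^2-b^2), sq_nonneg (a^2+a*b+b^2), sq_nonneg (a*b-1)]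
end

section
/- Let H be a real inner product space and η₁ > 0, k > 0. Suppose u, gₙ, gₙ₊₁, f ∈ H satisfy: (i) 12η₁⟪u, v⟫ = ⟪gₙ₊₁ - gₙ, v⟫ for v ∈ {gₙ, gₙ₊₁ - gₙ}, and (ii) 12‖u‖²_η = -⟪gₙ, u⟫ - ⟪f, u⟫ where ‖u‖²_η := ⟪Au, u⟫ for a self-adjoint operator A with η₁‖v‖² ≤ ⟪Av, v⟫ for all v. Then (1/(24η₁))(‖gₙ₊₁‖² - ‖gₙ‖²) ≤ -6⟪Au, u⟫ - ⟪f, u⟫. -/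
open RealInnerProductSpace

/-- Abstract pressure-velocity estimate (Theorem 3.2 of the paper): given the
pressure-stabilization identities (i) and the velocity definition tested with
`12η(φⁿ)u` (ii), one obtains
`(1/(24η₁))(‖gₙ₊₁‖² - ‖gₙ‖²) ≤ -6⟪Au, u⟫ - ⟪f, u⟫`. -/
theorem pressure_velocity_estimate (H : Type*) [NormedAddCommGroup H]
    [InnerProductSpace ℝ H]
    (A : H →L[ℝ] H) (hA : ∀ v w : H, ⟪A v, w⟫ = ⟪v, A w⟫)
    (η₁ : ℝ) (hη₁ : 0 < η₁) (k : ℝ) (hk : 0 < k)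
    (hAcoer : ∀ v : H, η₁ * ‖v‖^2 ≤ ⟪A v, v⟫)
    (u gn gn1 f : H)
    (hi₁ : 12 * η₁ * ⟪u, gn⟫ = ⟪gn1 - gn, gn⟫)
    (hi₂ : 12 * η₁ * ⟪u, gn1 - gn⟫ = ⟪gn1 - gn, gn1 - gn⟫)
    (hii : 12 * ⟪A u, u⟫ = -⟪gn, u⟫ - ⟪f, u⟫) :
    (1/(24*η₁)) * (‖gn1‖^2 - ‖gn‖^2) ≤ -6 * ⟪A u, u⟫ - ⟪f, u⟫ := by
  set d := gn1 - gn with hdef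
  have hgn1 : gn1 = gn + d := by simp [hdef]
  have hnorm : ‖gn1‖^2 = ‖gn‖^2 + 2*⟪gn, d⟫ + ‖d‖^2 := by
    rw [hgn1, @norm_add_sq_real]
  have hdd : ⟪d, d⟫ = ‖d‖^2 := real_inner_self_eq_norm_sq d
  have hcs : ⟪u, d⟫ ≤ ‖u‖ * ‖d‖ := real_inner_le_norm u d
  have hdn : (0:ℝ) ≤ ‖d‖ := norm_nonneg d
  have hud : ⟪u, d⟫ ≤ 12 * η₁ * ‖u‖^2 := by
    nlinarith [sq_nonneg (12*η₁*‖u‖ - ‖d‖), hi₂, hdd]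
  have hcoer := hAcoer u
  have hcomm : ⟪gn, u⟫ = ⟪u, gn⟫ := real_inner_comm u gn
  have hcomm2 : ⟪d, gn⟫ = ⟪gn, d⟫ := real_inner_comm gn d
  -- key: (1/(24η₁))(‖gn1‖²-‖gn‖²) = ⟪u,gn⟫ + ⟪u,d⟫/2
  have hkey : (1/(24*η₁)) * (‖gn1‖^2 - ‖gn‖^2) = ⟪u, gn⟫ + ⟪u, d⟫/2 := by
    rw [hnorm]
    have h1 : ⟪gn, d⟫ = 12 * η₁ * ⟪u, gn⟫ := by rw [← hcomm2, ← hi₁]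
    have h2 : ‖d‖^2 = 12 * η₁ * ⟪u, d⟫ := by rw [← hdd, ← hi₂]
    rw [h1, h2]
    field_simp
    ring
  rw [hkey]
  nlinarith [hii, hcomm, hud, hcoer]
end
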